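/- C_2 <_W C_{#≤2}, C_{#≤2} ≰_W C_ℕ, and C_3 ≰_W C_{#≤2}: closed choice on the two-element space is strictly continuously Weihrauch below closed choice on Cantor space restricted to sets with at most two elements; the latter is not continuously Weihrauch reducible to closed choice on the natural numbers; and closed choice on the three-element space is not continuously Weihrauch reducible to C_{#≤2}. -/

import Mathlib

open Filter Topology

abbrev Baire : Type := ℕ → ℕ

/-- The pairing `⟨p,q⟩(2n) = p(n)`, `⟨p,q⟩(2n+1) = q(n)`. -/
def pairB (p q : Baire) : Baire := fun n => if n % 2 = 0 then p (n / 2) else q (n / 2)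

/-- A problem: a partial multivalued function on Baire space. -/
structure Problem where
  dom : Set Baire
  sol : Baire → Set Baire

/-- Continuous Weihrauch reducibility. -/
def WRed (f g : Problem) : Prop :=
  ∃ (Kd Hd : Set Baire) (K H : Baire → Baire),
    ContinuousOn K Kd ∧ ContinuousOn H Hd ∧
      ∀ p ∈ f.dom, p ∈ Kd ∧ K p ∈ g.dom ∧
        ∀ q ∈ g.sol (K p), pairB p q ∈ Hd ∧ H (pairB p q) ∈ f.sol p

/-- Strong continuous Weihrauch reducibility. -/
def SWRed (f g : Problem) : Prop :=
  ∃ (Kd Hd : Set Baire) (K H : Baire → Baire),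
    ContinuousOn K Kd ∧ ContinuousOn H Hd ∧
      ∀ p ∈ f.dom, p ∈ Kd ∧ K p ∈ g.dom ∧
        ∀ q ∈ g.sol (K p), q ∈ Hd ∧ H q ∈ f.sol p

def WEquiv (f g : Problem) : Prop := WRed f g ∧ WRed g f
def SWEquiv (f g : Problem) : Prop := SWRed f g ∧ SWRed g f
def WLt (f g : Problem) : Prop := WRed f g ∧ ¬ WRed g f

/-- `range(p-1)`. -/
def rangeM (p : Baire) : Set ℕ := {n | ∃ i, p i = n + 1}

/-- Characteristic function of a set of naturals. -/
noncomputable def chi (A : Set ℕ) : Baire := A.indicator fun _ => 1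

noncomputable def EC : Problem where
  dom := Set.univ
  sol := fun p => {chi (rangeM p)}

noncomputable def EC1 : Problem where
  dom := {p | ((rangeM p)ᶜ).encard ≤ 1}
  sol := fun p => {chi (rangeM p)}

def pfst (r : Baire) : Baire := fun n => r (2 * n)
def psnd (r : Baire) : Baire := fun n => r (2 * n + 1)

noncomputable def SEP : Problem where
  dom := {r | rangeM (pfst r) ∩ rangeM (psnd r) = ∅}
  sol := fun r =>
    {s | ∃ A : Set ℕ, s = chi A ∧ rangeM (pfst r) ⊆ A ∧ A ⊆ (rangeM (psnd r))ᶜ}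

noncomputable def SEP1 : Problem where
  dom := {r | rangeM (pfst r) ∩ rangeM (psnd r) = ∅ ∧
    ((rangeM (pfst r) ∪ rangeM (psnd r))ᶜ).encard ≤ 1}
  sol := SEP.sol

/- rationals -/
def ratEnum (i : ℕ) : ℚ :=
  ((i.unpair.1 : ℚ) - (i.unpair.2.unpair.1 : ℚ)) / ((i.unpair.2.unpair.2 : ℚ) + 1)

def rhoCauchy (p : Baire) (x : ℝ) : Prop :=
  ∀ n, |(ratEnum (p n) : ℝ) - x| ≤ (2 : ℝ) ^ (-(n : ℤ))

def rhoNaive (p : Baire) (x : ℝ) : Prop :=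
  Tendsto (fun n => ((ratEnum (p n) : ℝ))) atTop (nhds x)

def rhoLt (p : Baire) (x : ℝ) : Prop := rangeM p = {n | (ratEnum n : ℝ) < x}
def rhoGt (p : Baire) (x : ℝ) : Prop := rangeM p = {n | x < (ratEnum n : ℝ)}

def rhoCfLt (p : Baire) (x : ℝ) : Prop :=
  (∀ n, p n ≤ 1) ∧ ∀ n, (p n = 1 ↔ (ratEnum n : ℝ) < x)
def rhoCfGt (p : Baire) (x : ℝ) : Prop :=
  (∀ n, p n ≤ 1) ∧ ∀ n, (p n = 1 ↔ x < (ratEnum n : ℝ))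

noncomputable def cfTail : List ℕ → ℝ
  | [] => 0
  | b :: l => 1 / ((b : ℝ) + cfTail l)

noncomputable def cfApprox (p : Baire) (k : ℕ) : ℝ :=
  ((Denumerable.ofNat ℤ (p 0) : ℤ) : ℝ) + cfTail ((List.range k).map fun i => p (i + 1))

def rhoCf (p : Baire) (x : ℝ) : Prop :=
  ((∀ i, 1 ≤ i → 1 ≤ p i) ∧ Tendsto (cfApprox p) atTop (nhds x)) ∨
    (∃ k, 1 ≤ k ∧ p k = 0 ∧ (∀ i, 1 ≤ i → i < k → 1 ≤ p i) ∧
      (2 ≤ k → 2 ≤ p (k - 1)) ∧ x = cfApprox p (k - 1))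

def rhoDec (p : Baire) (x : ℝ) : Prop :=
  (∀ n, 1 ≤ n → p n ≤ 9) ∧
    x = ((Denumerable.ofNat ℤ (p 0) : ℤ) : ℝ) + ∑' n : ℕ, (p (n + 1) : ℝ) / 10 ^ (n + 1)

/-- The implication problem between two representations of ℝ. -/
def implProblem (d1 d2 : Baire → ℝ → Prop) : Problem where
  dom := {p | ∃ x, d1 p x}
  sol := fun p => {q | ∃ x, d1 p x ∧ d2 q x}

/- trees / WKL / choice on Cantor space -/
def wordCode : List Bool → ℕ
  | [] => 0
  | b :: w => 2 * wordCode w + (if b then 2 else 1)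

def prefixList (x : Baire) (k : ℕ) : List Bool := (List.range k).map fun i => decide (x i = 1)

def isTreeCode (t : Baire) : Prop :=
  (∀ n, t n ≤ 1) ∧
    ∀ w v : List Bool, w <+: v → t (wordCode v) = 1 → t (wordCode w) = 1

def WKL : Problem where
  dom := {t | isTreeCode t ∧ {w : List Bool | t (wordCode w) = 1}.Infinite}
  sol := fun t => {x | (∀ n, x n ≤ 1) ∧ ∀ k, t (wordCode (prefixList x k)) = 1}

def Ap (p : Baire) : Set Baire :=
  {x | (∀ n, x n ≤ 1) ∧ ∀ k, wordCode (prefixList x k) ∉ rangeM p}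

def CCantor : Problem where
  dom := {p | (Ap p).Nonempty}
  sol := Ap

def Cle2 : Problem where
  dom := {p | (Ap p).Nonempty ∧ (Ap p).encard ≤ 2}
  sol := Ap

/- limit and parallelization -/
def projCount (r : Baire) (n : ℕ) : Baire := fun k => r (Nat.pair n k)

def limP : Problem where
  dom := {r | ∃ q : Baire, ∀ k, Tendsto (fun n => projCount r n k) atTop (nhds (q k))}
  sol := fun r => {q | ∀ k, Tendsto (fun n => projCount r n k) atTop (nhds (q k))}

def parallel (f : Problem) : Problem where
  dom := {r | ∀ n, projCount r n ∈ f.dom}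
  sol := fun r => {s | ∀ n, projCount s n ∈ f.sol (projCount r n)}

def MCT : Problem where
  dom := {r | ∃ xs : ℕ → ℝ, (∀ n, rhoCauchy (projCount r n) (xs n)) ∧
    Monotone xs ∧ BddAbove (Set.range xs)}
  sol := fun r => {q | ∃ xs : ℕ → ℝ, (∀ n, rhoCauchy (projCount r n) (xs n)) ∧
    Monotone xs ∧ BddAbove (Set.range xs) ∧ rhoCauchy q (⨆ n, xs n)}

/- SORT and RAT -/
open Classical in
noncomputable def sortOut (p : Baire) : Baire := fun k =>
  if {i | p i = 0}.Infinite then 0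
  else if k < {i | p i = 0}.ncard then 0 else 1

noncomputable def SORT : Problem where
  dom := {p | ∀ n, p n ≤ 1}
  sol := fun p => {sortOut p}

def znk (n : ℕ) : Baire := fun k => if k < n then 0 else 1

def RAT : Problem where
  dom := {p | ∃ x, rhoCauchy p x}
  sol := fun p => {s | ∃ x, rhoCauchy p x ∧
    ((∃ n, x = (ratEnum n : ℝ) ∧ s = znk n) ∨
      ((∀ r : ℚ, x ≠ (r : ℝ)) ∧ s = fun _ => 0))}

/- omniscience principles -/
def projFin (m i : ℕ) (r : Baire) : Baire := fun k => r (m * k + i - 1)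
def isZeroSeq (p : Baire) : Prop := ∀ k, p k = 0
def constSeq (i : ℕ) : Baire := fun _ => i

noncomputable def LPOn (n : ℕ) : Problem where
  dom := Set.univ
  sol := fun r => {constSeq ({i | 1 ≤ i ∧ i ≤ n ∧ isZeroSeq (projFin n i r)}.ncard)}

def LLPOn (n : ℕ) : Problem where
  dom := {r | {i | 1 ≤ i ∧ i ≤ n ∧ ¬ isZeroSeq (projFin n i r)}.encard ≤ 1}
  sol := fun r => {s | ∃ i, 1 ≤ i ∧ i ≤ n ∧ isZeroSeq (projFin n i r) ∧ s = constSeq i}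

def MLPOn (n : ℕ) : Problem where
  dom := {r | ∃ i, 1 ≤ i ∧ i ≤ n ∧ isZeroSeq (projFin n i r)}
  sol := fun r => {s | ∃ i, 1 ≤ i ∧ i ≤ n ∧ isZeroSeq (projFin n i r) ∧ s = constSeq i}

def LPO : Problem where
  dom := Set.univ
  sol := fun p => {s | (isZeroSeq p ∧ s = constSeq 1) ∨ (¬ isZeroSeq p ∧ s = constSeq 0)}

/- choice problems on ℕ etc. -/
def Cfin (n : ℕ) : Problem where
  dom := {p | ∃ i, i < n ∧ i ∉ rangeM p}
  sol := fun p => {s | ∃ i, i < n ∧ i ∉ rangeM p ∧ s = constSeq i}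

def ACCfin (n : ℕ) : Problem where
  dom := {p | (∃ i, i < n ∧ i ∉ rangeM p) ∧ ({i | i < n} ∩ rangeM p).encard ≤ 1}
  sol := (Cfin n).sol

def CNat : Problem where
  dom := {p | ∃ i, i ∉ rangeM p}
  sol := fun p => {s | ∃ i, i ∉ rangeM p ∧ s = constSeq i}

/- differentiation -/
instance : Countable (AddMonoidAlgebra ℚ ℕ) :=
  AddMonoidAlgebra.coeff_injective.countable

instance : Countable (Polynomial ℚ) :=
  Polynomial.toFinsupp_injective.countable

noncomputable def polyEnum : ℕ → Polynomial ℚ :=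
  (exists_surjective_nat (Polynomial ℚ)).choose

noncomputable def polyFun (k : ℕ) : C(Set.Icc (0:ℝ) 1, ℝ) :=
  ⟨fun x => ((polyEnum k).map (algebraMap ℚ ℝ)).eval (x : ℝ),
   (((polyEnum k).map (algebraMap ℚ ℝ)).continuous).comp continuous_subtype_val⟩

noncomputable def deltaC (p : Baire) (f : C(Set.Icc (0:ℝ) 1, ℝ)) : Prop :=
  ∀ n, ‖f - polyFun (p n)‖ ≤ (2 : ℝ) ^ (-(n : ℤ))

def IsDerivOn (f g : C(Set.Icc (0:ℝ) 1, ℝ)) : Prop :=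
  ∀ x : Set.Icc (0:ℝ) 1,
    HasDerivWithinAt (Set.IccExtend (by norm_num : (0:ℝ) ≤ 1) f) (g x) (Set.Icc 0 1) (x : ℝ)

noncomputable def diffP : Problem where
  dom := {p | ∃ f g, deltaC p f ∧ IsDerivOn f g}
  sol := fun p => {q | ∃ f g, deltaC p f ∧ IsDerivOn f g ∧ deltaC q g}

/-!
`C₂ ≤_W C_{#≤2}`: a `C₂`-instance `p` becomes the tree whose only paths are `0^ω` and `1^ω`,
each pruned once `p` lists it. Since also `C₂ ≤_W C_ℕ`, strictness follows from the second claim.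

`C_{#≤2} ≰_W C_ℕ`: consider a continuous family of `C_{#≤2}`-instances indexed by Cantor space.
If `C_{#≤2}` reduced to `C_ℕ`, the closed sets of parameters on which a fixed `i` is a correct
`C_ℕ`-answer would cover Cantor space, so by Baire category one of them has interior, and on it
`i` yields a continuous selection of the paths. The family is built so that this is impossible:
its paths share a growing spine, and a switch at a late stage extends the spine by either bit.

`C₃ ≰_W C_{#≤2}`: the empty `C₃`-instance is sent to a set of at most two paths, near which the
reduction answers `i` or `j`. By compactness of Cantor space, `p ↦ Ap p` is upper semicontinuous,
so after listing `i` and `j` late enough all paths stay near the old ones and the answers are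
still `i` or `j`, which are now wrong.
-/

theorem isLocallyConstant_of_forall_lt {α β : Type*} [TopologicalSpace α] [DiscreteTopology α]
    {f : (ℕ → α) → β} (k : ℕ) (h : ∀ x y, (∀ i < k, x i = y i) → f x = f y) :
    IsLocallyConstant f :=
  (IsLocallyConstant.iff_exists_open f).2 fun x =>
    ⟨PiNat.cylinder x k, PiNat.isOpen_cylinder _ x k, PiNat.self_mem_cylinder x k,
      fun y hy => h y x (PiNat.mem_cylinder_iff.1 hy)⟩

theorem ContinuousWithinAt.eventually_apply_eq {X : Type*} [TopologicalSpace X] {H : X → Baire}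
    {s : Set X} {x : X} (h : ContinuousWithinAt H s x) (n : ℕ) :
    ∀ᶠ y in 𝓝 x, y ∈ s → H y n = H x n :=
  eventually_nhdsWithin_iff.1 <|
    tendsto_pure.1 (nhds_discrete ℕ ▸ ((continuous_apply n).continuousAt.comp_continuousWithinAt h))

theorem pfst_pairB (p q : Baire) : pfst (pairB p q) = p := by
  ext n; simp [pfst, pairB]

theorem psnd_pairB (p q : Baire) : psnd (pairB p q) = q := by
  ext n; simp [psnd, pairB, Nat.add_mod, Nat.add_div]

theorem continuous_pfst : Continuous pfst := continuous_pi fun n => continuous_apply (2 * n)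

theorem continuous_psnd : Continuous psnd := continuous_pi fun n => continuous_apply (2 * n + 1)

theorem continuous_pairB : Continuous fun r : Baire × Baire => pairB r.1 r.2 := by
  refine continuous_pi fun n => ?_
  by_cases hn : n % 2 = 0 <;> simp only [pairB, hn, if_true, if_false] <;> fun_prop

theorem WRed.trans {f g h : Problem} (hfg : WRed f g) (hgh : WRed g h) : WRed f h := by
  obtain ⟨Kd₁, Hd₁, K₁, H₁, hK₁, hH₁, hred₁⟩ := hfg
  obtain ⟨Kd₂, Hd₂, K₂, H₂, hK₂, hH₂, hred₂⟩ := hgh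
  let mid : Baire → Baire := fun r => pairB (K₁ (pfst r)) (psnd r)
  let out : Baire → Baire := fun r => pairB (pfst r) (H₂ (mid r))
  refine ⟨Kd₁ ∩ K₁ ⁻¹' Kd₂, pfst ⁻¹' Kd₁ ∩ mid ⁻¹' Hd₂ ∩ out ⁻¹' Hd₁, K₂ ∘ K₁, H₁ ∘ out,
    hK₂.comp (hK₁.mono Set.inter_subset_left) fun _ hp => hp.2, ?_, fun p hp => ?_⟩
  · have hmid : ContinuousOn mid (pfst ⁻¹' Kd₁) :=
      continuous_pairB.comp_continuousOn
        ((hK₁.comp continuous_pfst.continuousOn fun _ h => h).prodMk continuous_psnd.continuousOn)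
    have hout : ContinuousOn out (pfst ⁻¹' Kd₁ ∩ mid ⁻¹' Hd₂) :=
      continuous_pairB.comp_continuousOn (continuous_pfst.continuousOn.prodMk
        (hH₂.comp (hmid.mono Set.inter_subset_left) fun _ h => h.2))
    exact hH₁.comp (hout.mono Set.inter_subset_left) fun _ h => h.2
  obtain ⟨hpK₁, hKp, hsol₁⟩ := hred₁ p hp
  obtain ⟨hKpK₂, hKKp, hsol₂⟩ := hred₂ (K₁ p) hKp
  refine ⟨⟨hpK₁, hKpK₂⟩, hKKp, fun q hq => ?_⟩
  obtain ⟨hq₂, hsol₂q⟩ := hsol₂ q hq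
  obtain ⟨hq₁, hsol₁q⟩ := hsol₁ _ hsol₂q
  have hmid : mid (pairB p q) = pairB (K₁ p) q := by simp only [mid, pfst_pairB, psnd_pairB]
  have hout : out (pairB p q) = pairB p (H₂ (pairB (K₁ p) q)) := by
    simp only [out, hmid, pfst_pairB]
  refine ⟨⟨⟨?_, ?_⟩, ?_⟩, ?_⟩
  · simpa only [Set.mem_preimage, pfst_pairB] using hpK₁
  · simpa only [Set.mem_preimage, hmid] using hq₂
  · simpa only [Set.mem_preimage, hout] using hq₁
  · simpa only [Function.comp_apply, hout] using hsol₁q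

theorem isOpen_setOf_mem_rangeM (n : ℕ) : IsOpen {p : Baire | n ∈ rangeM p} := by
  have : {p : Baire | n ∈ rangeM p} = ⋃ i, (fun p : Baire => p i) ⁻¹' {n + 1} := by
    ext p; simp [rangeM]
  rw [this]
  exact isOpen_iUnion fun i => (isOpen_discrete {n + 1}).preimage (continuous_apply i)

theorem wordCode_injective : Function.Injective wordCode := by
  intro w
  induction w with
  | nil =>
    rintro (_ | ⟨c, v⟩) h
    · rfl
    · simp only [wordCode] at h; split at h <;> omega
  | cons b w ih =>
    rintro (_ | ⟨c, v⟩) h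
    · simp only [wordCode] at h; split at h <;> omega
    · simp only [wordCode] at h
      obtain ⟨rfl, hwv⟩ : b = c ∧ wordCode w = wordCode v := by
        cases b <;> cases c <;> simp only [if_true, Bool.false_eq_true, if_false] at h <;>
          first | omega | exact ⟨rfl, by omega⟩
      rw [ih hwv]

theorem length_le_wordCode (w : List Bool) : w.length ≤ wordCode w := by
  induction w with
  | nil => simp [wordCode]
  | cons b w ih => simp only [wordCode, List.length_cons]; split <;> omega

theorem length_prefixList (x : Baire) (k : ℕ) : (prefixList x k).length = k := by
  simp [prefixList]

theorem getElem_prefixList (x : Baire) {k i : ℕ} (hi : i < (prefixList x k).length) :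
    (prefixList x k)[i] = decide (x i = 1) := by
  simp [prefixList]

theorem isLocallyConstant_prefixList (k : ℕ) : IsLocallyConstant fun x : Baire => prefixList x k :=
  isLocallyConstant_of_forall_lt k fun x y h =>
    List.map_congr_left fun i hi => by rw [h i (List.mem_range.1 hi)]

theorem eq_of_prefixList_eq {x y : Baire} {n k : ℕ} (hx : x n ≤ 1) (hy : y n ≤ 1) (hn : n < k)
    (h : prefixList x k = prefixList y k) : x n = y n := by
  have := List.getElem_of_eq h (by rw [length_prefixList]; exact hn)
  simp only [getElem_prefixList, decide_eq_decide] at this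
  omega

theorem isClosed_Ap (p : Baire) : IsClosed (Ap p) := by
  have : Ap p = (⋂ n, {x : Baire | x n ≤ 1}) ∩
      ⋂ k, ((fun x => prefixList x k) ⁻¹' {w | wordCode w ∈ rangeM p})ᶜ := by
    ext x; simp [Ap]
  rw [this]
  exact (isClosed_iInter fun n => isClosed_le (continuous_apply n) continuous_const).inter
    (isClosed_iInter fun k => (isLocallyConstant_prefixList k _).isClosed_compl)

theorem isCompact_Ap (p : Baire) : IsCompact (Ap p) :=
  (isCompact_univ_pi fun _ => (Set.finite_Iic 1).isCompact).of_isClosed_subset (isClosed_Ap p)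
    fun _ hx => Set.mem_univ_pi.2 fun n => hx.1 n

theorem Ap_subset_Ap {p q : Baire} (h : rangeM p ⊆ rangeM q) : Ap q ⊆ Ap p :=
  fun _ hx => ⟨hx.1, fun k hk => hx.2 k (h hk)⟩

def truncate (p : Baire) (M : ℕ) : Baire := fun i => if i < M then p i else 0

theorem mem_rangeM_truncate {p : Baire} {M n : ℕ} :
    n ∈ rangeM (truncate p M) ↔ ∃ i < M, p i = n + 1 := by
  simp only [rangeM, truncate, Set.mem_ofPred_eq]
  constructor
  · rintro ⟨i, hi⟩; split_ifs at hi with h; exact ⟨i, h, hi⟩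
  · rintro ⟨i, hi, hpi⟩; exact ⟨i, by rw [if_pos hi, hpi]⟩

theorem truncate_congr {p q : Baire} {M : ℕ} (h : ∀ i < M, p i = q i) :
    truncate p M = truncate q M :=
  funext fun i => by simp only [truncate]; split_ifs with hi; exacts [h i hi, rfl]

theorem antitone_Ap_truncate (p : Baire) : Antitone fun M => Ap (truncate p M) :=
  fun _ _ hMN => Ap_subset_Ap fun _ hn =>
    let ⟨i, hi, hpi⟩ := mem_rangeM_truncate.1 hn
    mem_rangeM_truncate.2 ⟨i, hi.trans_le hMN, hpi⟩

theorem iInter_Ap_truncate (p : Baire) : ⋂ M, Ap (truncate p M) = Ap p := by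
  refine subset_antisymm (fun x hx => ?_) (Set.subset_iInter fun M => Ap_subset_Ap fun _ hn =>
    let ⟨i, _, hpi⟩ := mem_rangeM_truncate.1 hn; ⟨i, hpi⟩)
  rw [Set.mem_iInter] at hx
  refine ⟨(hx 0).1, fun k ⟨i, hi⟩ => (hx (i + 1)).2 k (mem_rangeM_truncate.2 ⟨i, by omega, hi⟩)⟩

theorem eventually_Ap_subset {p : Baire} {U : Set Baire} (hU : ∀ x ∈ Ap p, U ∈ 𝓝 x) :
    ∀ᶠ r in 𝓝 p, Ap r ⊆ U := by
  obtain ⟨M, hM⟩ := exists_subset_nhds_of_isCompact'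
    (directed_of_isDirected_le (antitone_Ap_truncate p)) (fun _ => isCompact_Ap _)
    (fun _ => isClosed_Ap _) (by rwa [iInter_Ap_truncate])
  filter_upwards [(PiNat.isOpen_cylinder _ p M).mem_nhds (PiNat.self_mem_cylinder p M)] with r hr
  rw [← iInter_Ap_truncate r]
  refine (Set.iInter_subset _ M).trans ?_
  rwa [truncate_congr (PiNat.mem_cylinder_iff.1 hr)]

theorem Ap_nonempty_of_forall_truncate {p : Baire} (h : ∀ M, (Ap (truncate p M)).Nonempty) :
    (Ap p).Nonempty :=
  iInter_Ap_truncate p ▸ IsCompact.nonempty_iInter_of_directed_nonempty_isCompact_isClosed _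
    (directed_of_isDirected_le (antitone_Ap_truncate p)) h (fun _ => isCompact_Ap _)
    (fun _ => isClosed_Ap _)

open Classical in
/-- The code `p` with `rangeM p = wordCode '' S`: `Ap p` consists of the binary sequences none of
whose prefixes lies in `S`. -/
noncomputable def avoidCode (S : Set (List Bool)) : Baire :=
  fun n => if n ∈ wordCode '' S then n + 1 else 0

theorem avoidCode_eq_succ {S : Set (List Bool)} {i n : ℕ} :
    avoidCode S i = n + 1 ↔ i = n ∧ n ∈ wordCode '' S := by
  simp only [avoidCode]
  split_ifs with h
  · refine ⟨fun hi => ?_, fun ⟨hin, _⟩ => by rw [hin]⟩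
    obtain rfl : i = n := by omega
    exact ⟨rfl, h⟩
  · exact ⟨fun hi => by simp at hi, fun ⟨hin, hn⟩ => absurd (hin ▸ hn) h⟩

theorem mem_Ap_avoidCode {S : Set (List Bool)} {x : Baire} :
    x ∈ Ap (avoidCode S) ↔ (∀ n, x n ≤ 1) ∧ ∀ k, prefixList x k ∉ S := by
  have hrange : rangeM (avoidCode S) = wordCode '' S := by
    ext n
    exact ⟨fun ⟨i, hi⟩ => (avoidCode_eq_succ.1 hi).2, fun h => ⟨n, avoidCode_eq_succ.2 ⟨rfl, h⟩⟩⟩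
  simp only [Ap, hrange, wordCode_injective.mem_set_image, Set.mem_ofPred_eq]

theorem mem_Ap_truncate_avoidCode {S : Set (List Bool)} {M : ℕ} {x : Baire}
    (hx : ∀ n, x n ≤ 1) (h : ∀ k < M, prefixList x k ∉ S) : x ∈ Ap (truncate (avoidCode S) M) := by
  refine ⟨hx, fun k hk => ?_⟩
  obtain ⟨i, hiM, hi⟩ := mem_rangeM_truncate.1 hk
  obtain ⟨rfl, hmem⟩ := avoidCode_eq_succ.1 hi
  have hkM : k < M := (length_prefixList x k ▸ length_le_wordCode (prefixList x k)).trans_lt hiM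
  exact h k hkM (wordCode_injective.mem_set_image.1 hmem)

theorem continuous_avoidCode {X : Type*} [TopologicalSpace X] {S : X → Set (List Bool)}
    (hS : ∀ w, IsLocallyConstant fun x => w ∈ S x) : Continuous fun x => avoidCode (S x) := by
  classical
  refine continuous_pi fun n => IsLocallyConstant.continuous ?_
  by_cases hn : ∃ w, wordCode w = n
  · obtain ⟨w, rfl⟩ := hn
    simp only [avoidCode, wordCode_injective.mem_set_image]
    exact (hS w).comp fun b : Prop => if b then wordCode w + 1 else 0
  · refine IsLocallyConstant.of_constant _ fun x y => ?_
    have : ∀ x, n ∉ wordCode '' S x := fun x ⟨w, _, hw⟩ => hn ⟨w, hw⟩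
    simp only [avoidCode, if_neg (this x), if_neg (this y)]

theorem encard_le_of_forall_prefixList {A : Set Baire} {m : ℕ} (hA : ∀ x ∈ A, ∀ n, x n ≤ 1)
    (h : ∀ k, ((fun x => prefixList x k) '' A).encard ≤ m) : A.encard ≤ m := by
  by_contra! hlt
  obtain ⟨F, hFA, hF⟩ := Set.exists_subset_encard_eq (Order.add_one_le_of_lt hlt)
  have hFfin : F.Finite := Set.finite_of_encard_eq_coe (k := m + 1) (by rw [hF]; norm_cast)
  have hsep : ∀ x ∈ F, ∀ y ∈ F, ∀ᶠ k in atTop, prefixList x k = prefixList y k → x = y := by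
    intro x hx y hy
    by_cases hxy : x = y
    · exact Eventually.of_forall fun _ _ => hxy
    obtain ⟨j, hj⟩ := Function.ne_iff.1 hxy
    filter_upwards [eventually_gt_atTop j] with k hk hxyk
    exact absurd (eq_of_prefixList_eq (hA x (hFA hx) j) (hA y (hFA hy) j) hk hxyk) hj
  obtain ⟨k, hk⟩ := ((eventually_all_finite hFfin).2 fun x hx =>
    (eventually_all_finite hFfin).2 (hsep x hx)).exists
  have hinj : Set.InjOn (fun x => prefixList x k) F := fun x hx y hy => hk x hx y hy
  have := (hinj.encard_image.trans hF).symm.le.trans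
    ((Set.encard_le_encard (Set.image_mono hFA)).trans (h k))
  norm_cast at this
  omega

theorem Set.encard_pair_le {α : Type*} (a b : α) : ({a, b} : Set α).encard ≤ 2 :=
  (Set.encard_insert_le _ _).trans (by rw [Set.encard_singleton]; norm_num)

theorem Set.exists_mem_subset_pair_of_encard_le_two {α : Type*} {A : Set α} {x : α} (hx : x ∈ A)
    (h : A.encard ≤ 2) : ∃ y ∈ A, A ⊆ {x, y} := by
  rw [← Set.encard_sdiff_singleton_add_one hx] at h
  have hle : (A \ {x}).encard ≤ 1 :=
    (ENat.add_le_add_iff_right ENat.one_ne_top).1 (h.trans_eq (by norm_num))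
  obtain ⟨y, hy⟩ : ∃ y ∈ A, A \ {x} ⊆ {y} := by
    rcases Set.encard_le_one_iff_eq.1 hle with h | ⟨y, hy⟩
    · exact ⟨x, hx, h.trans_subset (Set.empty_subset _)⟩
    · exact ⟨y, (hy.symm.subset (Set.mem_singleton y)).1, hy.subset⟩
  exact ⟨y, hy.1, (Set.subset_insert_sdiff_singleton x A).trans (Set.insert_subset_insert hy.2)⟩

theorem mem_rangeM_pairB {p q : Baire} {n : ℕ} :
    n ∈ rangeM (pairB p q) ↔ n ∈ rangeM p ∨ n ∈ rangeM q := by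
  constructor
  · rintro ⟨i, hi⟩
    simp only [pairB] at hi
    split_ifs at hi
    exacts [Or.inl ⟨_, hi⟩, Or.inr ⟨_, hi⟩]
  · rintro (⟨i, hi⟩ | ⟨i, hi⟩)
    · exact ⟨2 * i, (congrFun (pfst_pairB p q) i).trans hi⟩
    · exact ⟨2 * i + 1, (congrFun (psnd_pairB p q) i).trans hi⟩

theorem wred_of_constSeq_head {f g : Problem} (K : Baire → Baire) (hK : Continuous K)
    (h : ∀ p ∈ f.dom, K p ∈ g.dom ∧ ∀ q ∈ g.sol (K p), constSeq (q 0) ∈ f.sol p) : WRed f g :=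
  ⟨Set.univ, Set.univ, K, fun r => constSeq (r 1), hK.continuousOn,
    (continuous_pi fun _ => continuous_apply 1).continuousOn,
    fun p hp => ⟨trivial, (h p hp).1, fun q hq => ⟨trivial, (h p hp).2 q hq⟩⟩⟩

def constKill (p : Baire) : Set (List Bool) :=
  {w | ∀ i < 2, w = prefixList (constSeq i) w.length → ∃ j < w.length, p j = i + 1}

theorem mem_Ap_constKill {p x : Baire} :
    x ∈ Ap (avoidCode (constKill p)) ↔ ∃ i < 2, i ∉ rangeM p ∧ x = constSeq i := by
  rw [mem_Ap_avoidCode]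
  constructor
  · rintro ⟨hx, hk⟩
    simp only [constKill, Set.mem_ofPred_eq, length_prefixList, not_forall, not_exists,
      not_and] at hk
    have hconst : ∀ n, x n = x 0 := fun n => by
      obtain ⟨i, hi, hpre, -⟩ := hk (n + 1)
      have h0 := eq_of_prefixList_eq (hx 0) (by simp [constSeq]; omega) (by omega) hpre
      have hn := eq_of_prefixList_eq (hx n) (by simp [constSeq]; omega) (by omega) hpre
      exact hn.trans h0.symm
    refine ⟨x 0, (hx 0).trans_lt (by norm_num), fun ⟨j, hj⟩ => ?_, funext hconst⟩
    obtain ⟨i, hi, hpre, hfresh⟩ := hk (j + 1)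
    have h0 := eq_of_prefixList_eq (hx 0) (by simp [constSeq]; omega) (by omega) hpre
    exact hfresh j (by omega) (by rw [hj, h0]; rfl)
  · rintro ⟨i, hi, hir, rfl⟩
    refine ⟨fun _ => by simp [constSeq]; omega, fun k hk => ?_⟩
    obtain ⟨j, -, hj⟩ := hk i hi (by rw [length_prefixList])
    exact hir ⟨j, hj⟩

theorem continuous_avoidCode_constKill : Continuous fun p => avoidCode (constKill p) :=
  continuous_avoidCode fun w => isLocallyConstant_of_forall_lt w.length fun p q h => by
    simp only [constKill, Set.mem_ofPred_eq]
    exact propext <| forall₂_congr fun i _ => imp_congr_right fun _ =>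
      exists_congr fun j => and_congr_right fun hj => by rw [h j hj]

theorem encard_Ap_constKill_le (p : Baire) : (Ap (avoidCode (constKill p))).encard ≤ 2 := by
  refine (Set.encard_le_encard fun x hx => ?_).trans (Set.encard_pair_le (constSeq 0) (constSeq 1))
  obtain ⟨i, hi, -, rfl⟩ := mem_Ap_constKill.1 hx
  interval_cases i <;> simp

theorem wred_Cfin2_Cle2 : WRed (Cfin 2) Cle2 := by
  refine wred_of_constSeq_head _ continuous_avoidCode_constKill fun p ⟨i, hi, hir⟩ =>
    ⟨⟨⟨constSeq i, mem_Ap_constKill.2 ⟨i, hi, hir, rfl⟩⟩, encard_Ap_constKill_le p⟩, fun q hq => ?_⟩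
  obtain ⟨j, hj, hjr, rfl⟩ := mem_Ap_constKill.1 hq
  exact ⟨j, hj, hjr, rfl⟩

theorem wred_Cfin2_CNat : WRed (Cfin 2) CNat := by
  let low : Baire → Baire := fun p n => if p n < 3 then p n else 0
  have hlow {p : Baire} {j : ℕ} (hj : j < 2) : j ∈ rangeM (low p) ↔ j ∈ rangeM p :=
    ⟨fun ⟨i, hi⟩ => ⟨i, by simp only [low] at hi; split_ifs at hi; omega⟩,
      fun ⟨i, hi⟩ => ⟨i, by simp only [low]; rw [if_pos (by omega), hi]⟩⟩
  have hhigh {j : ℕ} (hj : 2 ≤ j) : j ∈ rangeM (fun n => n + 3) := ⟨j - 2, by simp; omega⟩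
  have hlowc : Continuous low := continuous_pi fun n =>
    (continuous_of_discreteTopology (f := fun k : ℕ => if k < 3 then k else 0)).comp
      (continuous_apply n)
  have hK : Continuous fun p => pairB (fun n => n + 3) (low p) :=
    continuous_pairB.comp ((continuous_const (y := (fun n => n + 3 : Baire))).prodMk hlowc)
  refine wred_of_constSeq_head _ hK fun p ⟨i, hi, hir⟩ => ⟨⟨i, fun h => ?_⟩, ?_⟩
  · rcases mem_rangeM_pairB.1 h with ⟨k, hk⟩ | h
    · simp only at hk; omega
    · exact hir ((hlow hi).1 h)
  · rintro q ⟨j, hjr, rfl⟩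
    have hj : j < 2 := by
      by_contra! hj; exact hjr (mem_rangeM_pairB.2 (Or.inl (hhigh hj)))
    exact ⟨j, hj, fun h => hjr (mem_rangeM_pairB.2 (Or.inr ((hlow hj).2 h))), rfl⟩

/-- Stage `s` of `z` switches iff `z (2 * s)`, and then fixes the bit `!z (2 * s + 1)`.
`spine z c i d` is the bit at position `i` once stages `i, …, i + d - 1` are taken into
account: that of the first switch among them, or the default `c`. -/
def spine (z : ℕ → Bool) (c : Bool) : ℕ → ℕ → Bool
  | _, 0 => c
  | i, d + 1 => if z (2 * i) then !z (2 * i + 1) else spine z c (i + 1) d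

theorem spine_add (z : ℕ → Bool) (c : Bool) (i d e : ℕ) :
    spine z c i (d + e) = spine z (spine z c (i + d) e) i d := by
  induction d generalizing i with
  | zero => simp [spine]
  | succ d ih =>
    rw [Nat.add_right_comm, spine, spine, ih, Nat.add_right_comm i 1 d, Nat.add_assoc]

theorem spine_of_forall_not {z : ℕ → Bool} {i d : ℕ}
    (h : ∀ s, i ≤ s → s < i + d → z (2 * s) = false) (c : Bool) : spine z c i d = c := by
  induction d generalizing i with
  | zero => rfl
  | succ d ih =>
    rw [spine, h i le_rfl (by omega), if_neg Bool.false_ne_true]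
    exact ih fun s hs hs' => h s (by omega) (by omega)

theorem spine_congr {z z' : ℕ → Bool} {i d : ℕ} (h : ∀ j < 2 * (i + d), z j = z' j) (c : Bool) :
    spine z c i d = spine z' c i d := by
  induction d generalizing i with
  | zero => rfl
  | succ d ih =>
    rw [spine, spine, h (2 * i) (by omega), h (2 * i + 1) (by omega),
      ih fun j hj => h j (by omega)]

def cand (z : ℕ → Bool) (n : ℕ) (c : Bool) : List Bool :=
  (List.range n).map fun i => spine z c i (n - i)

theorem length_cand (z : ℕ → Bool) (n : ℕ) (c : Bool) : (cand z n c).length = n := by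
  simp [cand]

theorem getElem_cand (z : ℕ → Bool) {n : ℕ} (c : Bool) {i : ℕ} (hi : i < (cand z n c).length) :
    (cand z n c)[i] = spine z c i (n - i) := by
  simp [cand]

theorem take_cand (z : ℕ → Bool) {n N : ℕ} (hnN : n ≤ N) (c : Bool) :
    ∃ c', (cand z N c).take n = cand z n c' := by
  refine ⟨spine z c n (N - n), List.ext_getElem (by simp [length_cand]; omega) fun i h₁ h₂ => ?_⟩
  simp only [List.getElem_take, getElem_cand]
  rw [length_cand] at h₂
  rw [show N - i = (n - i) + (N - n) by omega, spine_add, Nat.add_sub_cancel' h₂.le]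

def spineKill (z : ℕ → Bool) : Set (List Bool) := {w | ∀ c, w ≠ cand z w.length c}

theorem mem_Ap_spineKill {z : ℕ → Bool} {x : Baire} :
    x ∈ Ap (avoidCode (spineKill z)) ↔ (∀ n, x n ≤ 1) ∧ ∀ n, ∃ c, prefixList x n = cand z n c := by
  simp only [mem_Ap_avoidCode, spineKill, Set.mem_ofPred_eq, length_prefixList, not_forall,
    not_not]

theorem continuous_avoidCode_spineKill : Continuous fun z => avoidCode (spineKill z) :=
  continuous_avoidCode fun w => isLocallyConstant_of_forall_lt (2 * w.length) fun z z' h => by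
    have hcand : ∀ c, cand z w.length c = cand z' w.length c := fun c =>
      List.map_congr_left fun i hi => spine_congr (fun j hj => h j (by
        have := List.mem_range.1 hi; omega)) c
    simp only [spineKill, Set.mem_ofPred_eq, hcand]

theorem Ap_spineKill_nonempty (z : ℕ → Bool) : (Ap (avoidCode (spineKill z))).Nonempty := by
  refine Ap_nonempty_of_forall_truncate fun M => ⟨fun i => (spine z false i (M - i)).toNat,
    mem_Ap_truncate_avoidCode (fun n => Bool.toNat_le _) fun k hk => ?_⟩
  obtain ⟨c, hc⟩ := take_cand z hk.le false
  refine fun hkill => hkill c ?_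
  rw [length_prefixList, ← hc]
  refine List.ext_getElem (by simp [length_prefixList, length_cand]; omega) fun i h₁ h₂ => ?_
  simp only [getElem_prefixList, List.getElem_take, getElem_cand]
  cases spine z false i (M - i) <;> rfl

theorem encard_Ap_spineKill_le (z : ℕ → Bool) : (Ap (avoidCode (spineKill z))).encard ≤ 2 := by
  refine encard_le_of_forall_prefixList (m := 2) (fun x hx => (mem_Ap_spineKill.1 hx).1) fun k =>
    (Set.encard_le_encard ?_).trans (Set.encard_pair_le (cand z k false) (cand z k true))
  rintro _ ⟨x, hx, rfl⟩
  obtain ⟨c, hc⟩ := (mem_Ap_spineKill.1 hx).2 k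
  cases c
  exacts [Or.inl hc, Or.inr hc]

theorem avoidCode_spineKill_mem_dom (z : ℕ → Bool) : avoidCode (spineKill z) ∈ Cle2.dom :=
  ⟨Ap_spineKill_nonempty z, encard_Ap_spineKill_le z⟩

theorem Ap_spineKill_switch {z : ℕ → Bool} {k T : ℕ} (hkT : k ≤ T)
    (hquiet : ∀ s, k ≤ s → s < T → z (2 * s) = false) (hT : z (2 * T) = true) {x : Baire}
    (hx : x ∈ Ap (avoidCode (spineKill z))) : decide (x k = 1) = !z (2 * T + 1) := by
  obtain ⟨c, hc⟩ := (mem_Ap_spineKill.1 hx).2 (T + 1)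
  have hk := List.getElem_of_eq hc (i := k) (by rw [length_prefixList]; omega)
  rw [getElem_prefixList, getElem_cand, show T + 1 - k = (T - k) + 1 by omega, spine_add,
    spine_of_forall_not fun s hs hs' => hquiet s hs (by omega), Nat.add_sub_cancel' hkT] at hk
  simpa [spine, hT] using hk

/-- At a parameter with no switch after stage `k`, a late switch can set the bit at position `k`
of every path either way. -/
theorem exists_not_mem_Ap_spineKill_of_continuousOn {V : Set (ℕ → Bool)} (hV : IsOpen V)
    (hne : V.Nonempty) {h : (ℕ → Bool) → Baire} (hh : ContinuousOn h V) :
    ∃ z ∈ V, h z ∉ Ap (avoidCode (spineKill z)) := by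
  obtain ⟨z₀, hz₀⟩ := hne
  obtain ⟨k, hk⟩ : ∃ k, (fun j => if j < 2 * k then z₀ j else false) ∈ V := by
    have hquiet : Tendsto (fun k j => if j < 2 * k then z₀ j else false) atTop (𝓝 z₀) :=
      tendsto_pi_nhds.2 fun j => tendsto_nhds_of_eventually_eq <|
        (eventually_gt_atTop j).mono fun k hk => if_pos (by omega)
    exact (hquiet.eventually (hV.mem_nhds hz₀)).exists
  set zs : ℕ → Bool := fun j => if j < 2 * k then z₀ j else false
  let sw (b : Bool) (T : ℕ) : ℕ → Bool := fun j =>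
    if j = 2 * T then true else if j = 2 * T + 1 then b else zs j
  have hev (b : Bool) : ∀ᶠ T in atTop, k ≤ T ∧ sw b T ∈ V ∧ h (sw b T) k = h zs k := by
    have hsw : Tendsto (sw b) atTop (𝓝 zs) := tendsto_pi_nhds.2 fun j =>
      tendsto_nhds_of_eventually_eq <| (eventually_gt_atTop j).mono fun T hT => by
        simp only [sw]; rw [if_neg (by omega), if_neg (by omega)]
    filter_upwards [eventually_ge_atTop k, hsw.eventually (hV.mem_nhds hk),
      hsw.eventually ((hh zs hk).eventually_apply_eq k)] with T hkT hV' hT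
    exact ⟨hkT, hV', hT hV'⟩
  by_contra! hsel
  obtain ⟨T, ⟨hkT, hVt, hht⟩, -, hVf, hhf⟩ := ((hev true).and (hev false)).exists
  have hflip (b : Bool) (hVb : sw b T ∈ V) (hhb : h (sw b T) k = h zs k) :
      decide (h zs k = 1) = !b := by
    rw [← hhb]
    refine Ap_spineKill_switch hkT (fun s hs hsT => ?_) (by simp [sw]) (hsel _ hVb) |>.trans
      (by simp [sw])
    simp only [sw, zs]
    rw [if_neg (by omega), if_neg (by omega), if_neg (by omega)]
  have := (hflip true hVt hht).symm.trans (hflip false hVf hhf)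
  simp at this

theorem not_wred_Cle2_CNat : ¬ WRed Cle2 CNat := by
  rintro ⟨Kd, Hd, K, H, hK, hH, hred⟩
  have hdom := avoidCode_spineKill_mem_dom
  have hKc : Continuous fun z => K (avoidCode (spineKill z)) :=
    hK.comp_continuous continuous_avoidCode_spineKill fun z => (hred _ (hdom z)).1
  obtain ⟨i, hi⟩ := nonempty_interior_of_iUnion_of_closed
    (f := fun i => {z | i ∉ rangeM (K (avoidCode (spineKill z)))})
    (fun i => (isOpen_setOf_mem_rangeM i).isClosed_compl.preimage hKc)
    (Set.eq_univ_of_forall fun z => Set.mem_iUnion.2 (hred _ (hdom z)).2.1)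
  have hsol : ∀ z ∈ interior {z | i ∉ rangeM (K (avoidCode (spineKill z)))},
      pairB (avoidCode (spineKill z)) (constSeq i) ∈ Hd ∧
        H (pairB (avoidCode (spineKill z)) (constSeq i)) ∈ Ap (avoidCode (spineKill z)) :=
    fun z hz => (hred _ (hdom z)).2.2 _ ⟨i, interior_subset hz, rfl⟩
  obtain ⟨z, hz, hnot⟩ := exists_not_mem_Ap_spineKill_of_continuousOn isOpen_interior hi
    (hH.comp (continuous_pairB.comp (continuous_avoidCode_spineKill.prodMk
      (continuous_const (y := constSeq i)))).continuousOn fun z hz => (hsol z hz).1)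
  exact hnot (hsol z hz).2

def enumAt (i j N : ℕ) : Baire := fun n => if n = N then i + 1 else if n = N + 1 then j + 1 else 0

theorem mem_rangeM_enumAt {i j N n : ℕ} : n ∈ rangeM (enumAt i j N) ↔ n = i ∨ n = j := by
  refine ⟨fun ⟨m, hm⟩ => ?_, fun h => ?_⟩
  · simp only [enumAt] at hm; split_ifs at hm <;> omega
  · rcases h with rfl | rfl
    exacts [⟨N, by simp [enumAt]⟩, ⟨N + 1, by simp [enumAt]⟩]

theorem tendsto_enumAt (i j : ℕ) : Tendsto (enumAt i j) atTop (𝓝 0) :=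
  tendsto_pi_nhds.2 fun n => tendsto_nhds_of_eventually_eq <|
    (eventually_gt_atTop (n + 1)).mono fun N hN => by
      simp only [enumAt]; rw [if_neg (by omega), if_neg (by omega)]; rfl

theorem not_wred_Cfin3_Cle2 : ¬ WRed (Cfin 3) Cle2 := by
  rintro ⟨Kd, Hd, K, H, hK, hH, hred⟩
  obtain ⟨hK0, ⟨⟨x, hx⟩, hcard⟩, hsol0⟩ := hred 0 ⟨0, by norm_num, fun ⟨_, h⟩ => by simp at h⟩
  obtain ⟨y, hy, hxy⟩ := Set.exists_mem_subset_pair_of_encard_le_two hx hcard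
  have hloc (a) (ha : a ∈ Ap (K 0)) : ∀ᶠ r in 𝓝 (0 : Baire) ×ˢ 𝓝 a,
      pairB r.1 r.2 ∈ Hd → H (pairB r.1 r.2) 0 = H (pairB 0 a) 0 := by
    rw [← nhds_prod_eq]
    exact (continuous_pairB.tendsto ((0 : Baire), a)).eventually
      ((hH _ (hsol0 a ha).1).eventually_apply_eq 0)
  obtain ⟨Px, hPx, Ux, hUx, hx'⟩ := eventually_prod_iff.1 (hloc x hx)
  obtain ⟨Py, hPy, Uy, hUy, hy'⟩ := eventually_prod_iff.1 (hloc y hy)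
  set i := H (pairB 0 x) 0
  set j := H (pairB 0 y) 0
  obtain ⟨l, hl3, hli, hlj⟩ : ∃ l < 3, l ≠ i ∧ l ≠ j :=
    ⟨if i ≠ 0 ∧ j ≠ 0 then 0 else if i ≠ 1 ∧ j ≠ 1 then 1 else 2, by split_ifs <;> omega⟩
  have hdom (N : ℕ) : enumAt i j N ∈ (Cfin 3).dom :=
    ⟨l, hl3, fun h => by rcases mem_rangeM_enumAt.1 h with h | h <;> contradiction⟩
  have htendK : Tendsto (enumAt i j) atTop (𝓝[Kd] 0) := tendsto_nhdsWithin_iff.2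
    ⟨tendsto_enumAt i j, Eventually.of_forall fun N => (hred _ (hdom N)).1⟩
  have hU : ∀ᶠ r in 𝓝 (K 0), Ap r ⊆ {q | Ux q ∨ Uy q} := eventually_Ap_subset fun a ha => by
    rcases hxy ha with rfl | rfl
    exacts [hUx.mono fun _ => Or.inl, hUy.mono fun _ => Or.inr]
  obtain ⟨N, hNU, hNx, hNy⟩ :=
    (((hK 0 hK0).tendsto.comp htendK).eventually hU |>.and
      (((tendsto_enumAt i j).eventually hPx).and ((tendsto_enumAt i j).eventually hPy))).exists
  obtain ⟨-, ⟨⟨q, hq⟩, -⟩, hsolN⟩ := hred _ (hdom N)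
  obtain ⟨hHd, l', -, hl'r, hHq⟩ := hsolN q hq
  rcases hNU hq with hq' | hq'
  · have := hx' hNx hq' hHd
    rw [hHq] at this
    exact hl'r (mem_rangeM_enumAt.2 (Or.inl this))
  · have := hy' hNy hq' hHd
    rw [hHq] at this
    exact hl'r (mem_rangeM_enumAt.2 (Or.inr this))

/-- `C₂ <_W C_{#≤2}`, `C_{#≤2} ≰_W C_ℕ`, and `C₃ ≰_W C_{#≤2}`. -/
theorem Cle2_position : WLt (Cfin 2) Cle2 ∧ ¬ WRed Cle2 CNat ∧ ¬ WRed (Cfin 3) Cle2 :=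
  ⟨⟨wred_Cfin2_Cle2, fun h => not_wred_Cle2_CNat (h.trans wred_Cfin2_CNat)⟩, not_wred_Cle2_CNat,
    not_wred_Cfin3_Cle2⟩
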